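/- Let X be a Fréchet sequence space (over ℕ) in which the sequence (e_n)_{n∈ℕ} of canonical vectors is a basis, let w := (w_n)_{n∈ℕ} be a sequence of nonzero scalars, and suppose the unilateral weighted backward shift B_w(x₁,x₂,x₃,…) := (w₁x₂, w₂x₃, w₃x₄, …) is a well-defined (continuous linear) operator on X. Then either (a) B_w is densely Li-Yorke chaotic, or (b) lim_{n→∞} B_wⁿ x = 0 for every x ∈ X. -/

import Mathlib

open Filter Topology MeasureTheory ENNReal

noncomputable section

def LiYorkePair {M : Type*} [PseudoMetricSpace M] (g : M → M) (x y : M) : Prop :=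
  Filter.liminf (fun n : ℕ => edist (g^[n] x) (g^[n] y)) Filter.atTop = 0 ∧
  0 < Filter.limsup (fun n : ℕ => edist (g^[n] x) (g^[n] y)) Filter.atTop

def LiYorkeChaotic {M : Type*} [PseudoMetricSpace M] (g : M → M) : Prop :=
  ∃ S : Set M, ¬ S.Countable ∧ S.Pairwise (LiYorkePair g)

def DenselyLiYorkeChaotic {M : Type*} [PseudoMetricSpace M] (g : M → M) : Prop :=
  ∃ S : Set M, Dense S ∧ ¬ S.Countable ∧ S.Pairwise (LiYorkePair g)

/-!
Call `y` semi-irregular for `T` if `0` is a cluster point of its orbit but the orbit does not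
tend to `0`. For a translation-invariant metric, `(a, b)` is a Li-Yorke pair as soon as `a - b`
is semi-irregular.

For the weighted backward shift every finitely supported vector has an eventually zero orbit, and
these vectors are dense. If some orbit does not tend to `0`, one glues differences of such vectors
into a convergent series `y = ∑ zᵢ`, where `zᵢ` is tiny on the iterates where the earlier blocks
are still alive, large at one later time `νᵢ`, and dead afterwards; this `y` is semi-irregular.
Finally, with `(uᵢ)` a dense sequence of eventually-null vectors and `f : 𝕂 → X` taking each value
`uᵢ` at scalars `c → 0`, the set `{f c + c • y}` is dense and uncountable, and the difference of
two of its points is a nonzero multiple of `y` plus an eventually-null vector, hence semi-irregular.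
-/

section InvariantMetric

variable {X : Type*} [AddCommGroup X] [PseudoMetricSpace X] [IsIsometricVAdd X X]

theorem dist_sub_zero (a b : X) : dist (a - b) 0 = dist a b := by
  rw [← dist_sub_right a b b, sub_self]

theorem dist_sum_range_succ (z : ℕ → X) (N : ℕ) :
    dist (∑ l ∈ Finset.range N, z l) (∑ l ∈ Finset.range (N + 1), z l) = dist (z N) 0 := by
  rw [Finset.sum_range_succ, dist_comm _ 0, ← dist_add_left (∑ l ∈ Finset.range N, z l) 0,
    add_zero]

theorem dist_sum_range_le_of_tendsto {z : ℕ → X} {y : X}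
    (hy : Tendsto (fun N => ∑ l ∈ Finset.range N, z l) atTop (𝓝 y)) {i : ℕ}
    (hz : ∀ l, i < l → dist (z l) 0 ≤ (1 / 2) ^ l) :
    dist (∑ l ∈ Finset.range (i + 1), z l) y ≤ (1 / 2) ^ i := by
  have := dist_le_of_le_geometric_two_of_tendsto (C := (1 / 2) ^ i)
    (f := fun k => ∑ l ∈ Finset.range (k + (i + 1)), z l) (fun k => ?_)
    ((tendsto_add_atTop_iff_nat (i + 1)).2 hy) 0
  · rwa [zero_add, pow_zero, div_one] at this
  · rw [add_right_comm, dist_sum_range_succ]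
    exact (hz _ (by omega)).trans_eq (by rw [one_div_pow, one_div_pow]; ring)

end InvariantMetric

section SemiIrregular

variable {R X : Type*} [Semiring R] [AddCommGroup X] [Module R X] [TopologicalSpace X]

def IsSemiIrregular (T : X →L[R] X) (y : X) : Prop :=
  MapClusterPt 0 atTop (fun n => (T ^ n) y) ∧ ¬ Tendsto (fun n => (T ^ n) y) atTop (𝓝 0)

variable {T : X →L[R] X} {y : X}

theorem IsSemiIrregular.ne_zero (hy : IsSemiIrregular T y) : y ≠ 0 := by
  rintro rfl
  exact hy.2 (by simp only [map_zero, tendsto_const_nhds])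

theorem IsSemiIrregular.add_of_eventually_eq_zero (hy : IsSemiIrregular T y) {d : X}
    (hd : ∀ᶠ n in atTop, (T ^ n) d = 0) : IsSemiIrregular T (d + y) := by
  have h : (fun n => (T ^ n) (d + y)) =ᶠ[atTop] fun n => (T ^ n) y :=
    hd.mono fun n hn => by simp only [map_add, hn, zero_add]
  exact ⟨h.mapClusterPt_iff.2 hy.1, (tendsto_congr' h).not.2 hy.2⟩

theorem IsSemiIrregular.smul {𝕂 : Type*} [Field 𝕂] [Module 𝕂 X] [ContinuousConstSMul 𝕂 X]
    {T : X →L[𝕂] X} (hy : IsSemiIrregular T y) {c : 𝕂} (hc : c ≠ 0) :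
    IsSemiIrregular T (c • y) := by
  simp only [IsSemiIrregular, map_smul]
  refine ⟨?_, fun h => hy.2 ?_⟩
  · have := hy.1.continuousAt_comp (continuous_const_smul c).continuousAt
    rwa [smul_zero] at this
  · exact (tendsto_const_smul_iff₀ hc).1 (by rwa [smul_zero])

theorem IsSemiIrregular.liYorkePair {X : Type*} [AddCommGroup X] [Module R X] [PseudoMetricSpace X]
    [IsIsometricVAdd X X] {T : X →L[R] X} {a b : X} (h : IsSemiIrregular T (a - b)) :
    LiYorkePair (⇑T) a b := by
  have hdist : ∀ n, edist ((⇑T)^[n] a) ((⇑T)^[n] b) = edist ((T ^ n) (a - b)) 0 := fun n => by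
    rw [← FunLike.coe_pow_eq_iterate, map_sub, ← edist_sub_right _ _ ((T ^ n) b), sub_self]
  simp only [LiYorkePair, hdist]
  refine ⟨le_antisymm ?_ zero_le, pos_iff_ne_zero.2 fun hsup => h.2 ?_⟩
  · have := (h.1.continuousAt_comp (f := (edist · (0 : X))) (by fun_prop)).liminf_le
    rwa [edist_self] at this
  · exact tendsto_iff_edist_tendsto_0.2 (tendsto_of_le_liminf_of_limsup_le zero_le hsup.le)

end SemiIrregular

section Construction

variable {R X : Type*} [Semiring R] [AddCommGroup X] [Module R X] [PseudoMetricSpace X]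
  [IsIsometricVAdd X X] {T : X →L[R] X}

theorem exists_eventually_zero_small_then_large {x : X}
    (hx : x ∈ closure {v | ∀ᶠ n in atTop, (T ^ n) v = 0}) {ε : ℝ} (hε : 0 < ε)
    (hfreq : ∃ᶠ n in atTop, 2 * ε ≤ dist ((T ^ n) x) 0) (Q : ℕ) {η : ℝ} (hη : 0 < η) :
    ∃ z ν K, Q < ν ∧ ν < K ∧ (∀ m, K ≤ m → (T ^ m) z = 0) ∧
      (∀ m ≤ Q, dist ((T ^ m) z) 0 ≤ η) ∧ ε ≤ dist ((T ^ ν) z) 0 := by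
  -- `z = v' - v` for eventually-null `v, v'` near `x`: `v` is dead at a time `ν` where `T ^ ν x` is
  -- large, and `v'` is chosen afterwards so close to `x` that `T ^ ν v'` is still large.
  have hnear : ∀ m δ, 0 < δ → ∀ᶠ v in 𝓝 x, dist ((T ^ m) v) ((T ^ m) x) < δ := fun m δ hδ =>
    (T ^ m).continuous.continuousAt (Metric.ball_mem_nhds _ hδ)
  have hnearQ : ∀ᶠ v in 𝓝 x, ∀ m ∈ Set.Iic Q, dist ((T ^ m) v) ((T ^ m) x) < η / 2 :=
    (eventually_all_finite (Set.finite_Iic Q)).2 fun m _ => hnear m _ (half_pos hη)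
  have hfreqN := mem_closure_iff_frequently.1 hx
  obtain ⟨v, hvN, hv⟩ := (hfreqN.and_eventually hnearQ).exists
  obtain ⟨Kv, hKv⟩ := eventually_atTop.1 hvN
  obtain ⟨ν, hνx, hνQ⟩ := (hfreq.and_eventually (eventually_gt_atTop (max Q Kv))).exists
  obtain ⟨v', hv'N, hv'Q, hv'ν⟩ :=
    (hfreqN.and_eventually (hnearQ.and (hnear ν ε hε))).exists
  obtain ⟨Kv', hKv'⟩ := eventually_atTop.1 hv'N
  have hkill : ∀ m, max Kv Kv' ≤ m → (T ^ m) (v' - v) = 0 := fun m hm => by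
    rw [map_sub, hKv m (le_of_max_le_left hm), hKv' m (le_of_max_le_right hm), sub_zero]
  refine ⟨v' - v, ν, max (ν + 1) (max Kv Kv'), by omega, by omega,
    fun m hm => hkill m (le_of_max_le_right hm), fun m hm => ?_, ?_⟩
  · rw [map_sub, dist_sub_zero]
    linarith [dist_triangle_right ((T ^ m) v') ((T ^ m) v) ((T ^ m) x), hv m hm, hv'Q m hm]
  · rw [map_sub, hKv ν (by omega), sub_zero]
    linarith [dist_triangle ((T ^ ν) x) ((T ^ ν) v') 0, dist_comm ((T ^ ν) x) ((T ^ ν) v')]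

theorem exists_isSemiIrregular_of_blocks [CompleteSpace X] {z : ℕ → X} {τ ν : ℕ → ℕ} {ε : ℝ}
    (hε : 0 < ε) (hτν : ∀ i, τ i < ν i) (hντ : ∀ i, ν i < τ (i + 1))
    (hkill : ∀ i m, τ (i + 1) ≤ m → (T ^ m) (z i) = 0)
    (hsmall : ∀ i m, m ≤ τ i → dist ((T ^ m) (z i)) 0 ≤ (1 / 2) ^ i)
    (hbig : ∀ i, ε ≤ dist ((T ^ ν i) (z i)) 0) :
    ∃ y, IsSemiIrregular T y := by
  have hτ : StrictMono τ := strictMono_nat_of_lt_succ fun i => (hτν i).trans (hντ i)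
  obtain ⟨y, hy⟩ := cauchySeq_tendsto_of_complete <| cauchySeq_of_le_geometric_two (C := 2)
    (f := fun N => ∑ l ∈ Finset.range N, z l) fun N => by
      rw [dist_sum_range_succ]
      simpa using (hsmall N 0 (Nat.zero_le _)).trans_eq (by rw [one_div_pow]; ring)
  -- Between `τ i` and `τ (i + 1)` the earlier blocks are dead and the later ones are small.
  have hnear : ∀ i m, τ i ≤ m → m ≤ τ (i + 1) →
      dist ((T ^ m) y) ((T ^ m) (z i)) ≤ (1 / 2) ^ i := by
    intro i m hτm hmτ
    have hdead : ∑ l ∈ Finset.range i, (T ^ m) (z l) = 0 :=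
      Finset.sum_eq_zero fun l hl => hkill l m ((hτ.monotone (Finset.mem_range.1 hl)).trans hτm)
    have := dist_sum_range_le_of_tendsto (z := fun l => (T ^ m) (z l))
      (by simpa only [Function.comp_def, map_sum] using ((T ^ m).continuous.tendsto y).comp hy)
      fun l hl => hsmall l m (hmτ.trans (hτ.monotone hl))
    rwa [Finset.sum_range_succ, hdead, zero_add, dist_comm] at this
  have hν : Tendsto ν atTop atTop :=
    tendsto_atTop_mono (fun i => (hτ.id_le i).trans (hτν i).le) tendsto_id
  have hgeom : Tendsto (fun i : ℕ => (1 / 2 : ℝ) ^ i) atTop (𝓝 0) :=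
    tendsto_pow_atTop_nhds_zero_of_lt_one (by norm_num) (by norm_num)
  refine ⟨y, MapClusterPt.of_comp (hτ.tendsto_atTop.comp (tendsto_add_atTop_nat 1)) ?_,
    fun h0 => ?_⟩
  · refine Tendsto.mapClusterPt (tendsto_iff_dist_tendsto_zero.2
      (squeeze_zero (fun _ => dist_nonneg) (fun i => ?_) hgeom))
    simpa [hkill i _ le_rfl] using hnear i (τ (i + 1)) (hτ.monotone (Nat.le_succ i)) le_rfl
  · obtain ⟨i, hνi, hi⟩ := (((h0.comp hν).eventually (Metric.ball_mem_nhds 0 (half_pos hε))).and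
      (hgeom.eventually (gt_mem_nhds (half_pos hε)))).exists
    change dist ((T ^ ν i) y) 0 < ε / 2 at hνi
    linarith [hbig i, hnear i (ν i) (hτν i).le (hντ i).le,
      dist_triangle_left ((T ^ ν i) (z i)) 0 ((T ^ ν i) y)]

theorem exists_isSemiIrregular [CompleteSpace X] {x : X}
    (hx : x ∈ closure {v | ∀ᶠ n in atTop, (T ^ n) v = 0})
    (hxT : ¬ Tendsto (fun n => (T ^ n) x) atTop (𝓝 0)) : ∃ y, IsSemiIrregular T y := by
  rw [Metric.tendsto_nhds] at hxT
  push Not at hxT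
  obtain ⟨ε, hε, hfreq⟩ := hxT
  choose z ν K hQν hνK hkill hsmall hbig using fun Q i =>
    exists_eventually_zero_small_then_large hx (half_pos hε)
      (hfreq.mono fun n hn => by linarith) Q (η := (1 / 2 : ℝ) ^ i) (by positivity)
  -- block `i` must be small up to time `τ i`, the time at which block `i - 1` dies
  let τ : ℕ → ℕ := fun i => Nat.rec 0 (fun i Q => K Q i) i
  exact exists_isSemiIrregular_of_blocks (z := fun i => z (τ i) i) (ν := fun i => ν (τ i) i)
    (half_pos hε) (fun i => hQν _ _) (fun i => hνK _ _) (fun i => hkill _ _) (fun i => hsmall _ _)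
    (fun i => hbig _ _)

end Construction

section Chaos

theorem denseRange_extend_add_smul {𝕂 X : Type*} [Semiring 𝕂] [TopologicalSpace 𝕂]
    [AddCommMonoid X] [Module 𝕂 X] [TopologicalSpace X] [ContinuousAdd X] [ContinuousSMul 𝕂 X]
    {s : ℕ → 𝕂} (hs : Function.Injective s) (hs0 : Tendsto s atTop (𝓝 0)) {u : ℕ → X}
    (hu : DenseRange u) (y : X) :
    DenseRange fun c => Function.extend s (fun k => u k.unpair.1) 0 c + c • y := by
  refine dense_closure.1 (hu.mono (Set.range_subset_iff.2 fun i => ?_))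
  have hpair : Tendsto (Nat.pair i) atTop atTop :=
    tendsto_atTop_mono (Nat.right_le_pair i) tendsto_id
  have hlim : Tendsto (fun j => u i + s (i.pair j) • y) atTop (𝓝 (u i)) := by
    simpa using tendsto_const_nhds.add ((hs0.comp hpair).smul_const y)
  exact mem_closure_of_tendsto hlim
    (Eventually.of_forall fun j => ⟨s (i.pair j), by simp [hs.extend_apply]⟩)

variable {𝕂 X : Type*} [RCLike 𝕂] [AddCommGroup X] [Module 𝕂 X] [PseudoMetricSpace X]
  [IsIsometricVAdd X X] [ContinuousAdd X] [ContinuousSMul 𝕂 X] {T : X →L[𝕂] X}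

theorem denselyLiYorkeChaotic_of_isSemiIrregular {y : X} (hy : IsSemiIrregular T y) {u : ℕ → X}
    (hu : DenseRange u) (hnull : ∀ i, ∀ᶠ n in atTop, (T ^ n) (u i) = 0) :
    DenselyLiYorkeChaotic ⇑T := by
  set s : ℕ → 𝕂 := fun k => 1 / ((k : 𝕂) + 1)
  have hs : Function.Injective s := fun a b h => by simpa [s] using h
  set f : 𝕂 → X := Function.extend s (fun k => u k.unpair.1) 0
  have hf : ∀ c, ∀ᶠ n in atTop, (T ^ n) (f c) = 0 := by
    intro c
    by_cases hc : ∃ k, s k = c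
    · obtain ⟨k, rfl⟩ := hc
      simpa only [f, hs.extend_apply] using hnull _
    · simp [f, Function.extend_apply' _ _ _ hc]
  have hsemi : ∀ c c', c ≠ c' → IsSemiIrregular T ((f c + c • y) - (f c' + c' • y)) := by
    intro c c' hcc'
    have hd : ∀ᶠ n in atTop, (T ^ n) (f c - f c') = 0 :=
      ((hf c).and (hf c')).mono fun n hn => by rw [map_sub, hn.1, hn.2, sub_zero]
    convert (hy.smul (sub_ne_zero.2 hcc')).add_of_eventually_eq_zero hd using 1
    rw [sub_smul]
    abel
  refine ⟨Set.range fun c => f c + c • y,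
    denseRange_extend_add_smul hs tendsto_one_div_add_atTop_nhds_zero_nat hu y,
    fun hcount => ?_, ?_⟩
  · have hinj : Function.Injective fun c => f c + c • y := fun c c' h =>
      not_not.1 fun hne => (hsemi c c' hne).ne_zero (sub_eq_zero.2 h)
    have : Uncountable 𝕂 := RCLike.ofReal_injective.uncountable
    have := hcount.preimage hinj
    rw [Set.preimage_range] at this
    exact not_countable (Set.countable_univ_iff.1 this)
  · rintro _ ⟨c, rfl⟩ _ ⟨c', rfl⟩ hne
    exact (hsemi c c' fun h => hne (h ▸ rfl)).liYorkePair

theorem denselyLiYorkeChaotic_or_tendsto_zero [CompleteSpace X]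
    [TopologicalSpace.SeparableSpace X] (T : X →L[𝕂] X)
    (hN : Dense {v | ∀ᶠ n in atTop, (T ^ n) v = 0}) :
    DenselyLiYorkeChaotic ⇑T ∨ ∀ x, Tendsto (fun n => (⇑T)^[n] x) atTop (𝓝 0) := by
  refine or_iff_not_imp_right.2 fun h => ?_
  push Not at h
  obtain ⟨x, hx⟩ := h
  obtain ⟨y, hy⟩ := exists_isSemiIrregular (hN x) (by simpa only [FunLike.coe_pow_eq_iterate])
  obtain ⟨D, hDN, hDc, hD⟩ := hN.exists_countable_dense_subset
  obtain ⟨u, rfl⟩ := hDc.exists_eq_range hD.nonempty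
  exact denselyLiYorkeChaotic_of_isSemiIrregular hy hD fun i => hDN ⟨i, rfl⟩

end Chaos

section WeightedShift

theorem coord_iterate_weightedShift {X 𝕂 : Type*} [CommMonoid 𝕂] {ι : X → ℕ → 𝕂} {B : X → X}
    {w : ℕ → 𝕂} (hB : ∀ x n, ι (B x) n = w n * ι x (n + 1)) (k : ℕ) (x : X) (n : ℕ) :
    ι (B^[k] x) n = (∏ i ∈ Finset.range k, w (n + i)) * ι x (n + k) := by
  induction k generalizing x with
  | zero => simp
  | succ k ih =>
    rw [Function.iterate_succ_apply, ih, hB, Finset.prod_range_succ, mul_assoc, ← add_assoc]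

theorem weightedShift_pow_apply_eq_zero {𝕂 X : Type*} [CommSemiring 𝕂] [TopologicalSpace 𝕂]
    [AddCommMonoid X] [Module 𝕂 X] [TopologicalSpace X] {ι : X →L[𝕂] (ℕ → 𝕂)}
    (hι : Function.Injective ι) {w : ℕ → 𝕂} {B : X →L[𝕂] X}
    (hB : ∀ x n, ι (B x) n = w n * ι x (n + 1)) {v : X} {N : ℕ}
    (hv : ∀ j, N ≤ j → ι v j = 0) {n : ℕ} (hn : N ≤ n) : (B ^ n) v = 0 := by
  refine hι (funext fun j => ?_)
  rw [FunLike.coe_pow_eq_iterate, coord_iterate_weightedShift (ι := ι) (B := B) hB,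
    hv (j + n) (by omega), mul_zero, map_zero, Pi.zero_apply]

variable {𝕂 X : Type*} [Semiring 𝕂] [AddCommMonoid X] [Module 𝕂 X] [TopologicalSpace X]

theorem denseRange_sum_smul {ι : X → ℕ → 𝕂} {E : ℕ → X}
    (hbasis : ∀ x : X, Tendsto (fun N : ℕ => ∑ m ∈ Finset.range N, ι x m • E m) atTop (𝓝 x)) :
    DenseRange fun p : ℕ × (ℕ → 𝕂) => ∑ m ∈ Finset.range p.1, p.2 m • E m := fun x =>
  mem_closure_of_tendsto (hbasis x) (Eventually.of_forall fun N => ⟨(N, ι x), rfl⟩)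

theorem coord_sum_smul_eq_zero [TopologicalSpace 𝕂] {ι : X →L[𝕂] (ℕ → 𝕂)} {E : ℕ → X}
    (hE : ∀ n, ι (E n) = Pi.single n 1) (c : ℕ → 𝕂) {N j : ℕ} (hj : N ≤ j) :
    ι (∑ m ∈ Finset.range N, c m • E m) j = 0 := by
  simp only [map_sum, map_smul, hE, Finset.sum_apply, Pi.smul_apply, smul_eq_mul]
  refine Finset.sum_eq_zero fun m hm => ?_
  rw [Pi.single_apply, if_neg (by have := Finset.mem_range.1 hm; omega), mul_zero]

end WeightedShift

theorem unilateral_shift_frechet_dichotomy_general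
    {𝕂 X : Type} [RCLike 𝕂] [AddCommGroup X] [Module 𝕂 X]
    [MetricSpace X] [CompleteSpace X] [ContinuousAdd X] [ContinuousSMul 𝕂 X]
    (hinv : ∀ x y z : X, dist (x + z) (y + z) = dist x y)
    -- `X` is a Fréchet sequence space: it embeds continuously and linearly in `𝕂^ℕ`
    (ι : X →L[𝕂] (ℕ → 𝕂)) (hι : Function.Injective ι)
    -- the canonical vectors belong to `X` and form a basis
    (E : ℕ → X) (hE : ∀ n, ι (E n) = Pi.single n 1)
    (hbasis : ∀ x : X,
      Tendsto (fun N : ℕ => ∑ m ∈ Finset.range N, ι x m • E m) atTop (nhds x))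
    (w : ℕ → 𝕂)
    (B : X →L[𝕂] X) (hB : ∀ (x : X) (n : ℕ), ι (B x) n = w n * ι x (n + 1)) :
    DenselyLiYorkeChaotic (⇑B) ∨
      ∀ x : X, Tendsto (fun n : ℕ => (⇑B)^[n] x) atTop (nhds 0) := by
  have : IsIsometricVAdd X X := ⟨fun c => Isometry.of_dist_eq fun x y => by
    rw [vadd_eq_add, vadd_eq_add, add_comm c, add_comm c, hinv]⟩
  have hdense := denseRange_sum_smul (𝕂 := 𝕂) hbasis
  have : TopologicalSpace.SeparableSpace X := hdense.separableSpace <|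
    continuous_prod_of_discrete_left.2 fun N => by dsimp only; fun_prop
  refine denselyLiYorkeChaotic_or_tendsto_zero B (hdense.mono ?_)
  rintro _ ⟨⟨N, c⟩, rfl⟩
  exact eventually_atTop.2 ⟨N, fun n => weightedShift_pow_apply_eq_zero hι hB
    (fun j => coord_sum_smul_eq_zero hE c)⟩

theorem unilateral_shift_frechet_dichotomy
    {𝕂 X : Type} [RCLike 𝕂] [AddCommGroup X] [Module 𝕂 X]
    [MetricSpace X] [CompleteSpace X] [ContinuousAdd X] [ContinuousSMul 𝕂 X]
    [Module ℝ X] [IsScalarTower ℝ 𝕂 X] [LocallyConvexSpace ℝ X]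
    (hinv : ∀ x y z : X, dist (x + z) (y + z) = dist x y)
    -- `X` is a Fréchet sequence space: it embeds continuously and linearly in `𝕂^ℕ`
    (ι : X →L[𝕂] (ℕ → 𝕂)) (hι : Function.Injective ι)
    -- the canonical vectors belong to `X` and form a basis
    (E : ℕ → X) (hE : ∀ n, ι (E n) = Pi.single n 1)
    (hbasis : ∀ x : X,
      Tendsto (fun N : ℕ => ∑ m ∈ Finset.range N, ι x m • E m) atTop (nhds x))
    (w : ℕ → 𝕂) (hw0 : ∀ n, w n ≠ 0)
    (B : X →L[𝕂] X) (hB : ∀ (x : X) (n : ℕ), ι (B x) n = w n * ι x (n + 1)) :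
    DenselyLiYorkeChaotic (⇑B) ∨
      ∀ x : X, Tendsto (fun n : ℕ => (⇑B)^[n] x) atTop (nhds 0) :=
  unilateral_shift_frechet_dichotomy_general hinv ι hι E hE hbasis w B hB
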